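/- arXiv:1102.0147 — 4 statements merged into one kernel-verified Lean document; each statement's English description precedes it below -/
import Mathlib

section
/- Let (X, d_X) and (Y, d_Y) be metric spaces and equip X × Y with the metric whose square is d_X² + d_Y². Let μ₁, ν₁ be Borel probability measures on X and μ₂, ν₂ Borel probability measures on Y. Suppose r₁ : X → X is a measurable map pushing μ₁ forward to ν₁ with ∫ d_X(x, r₁(x))² dμ₁(x) = W₂²(μ₁, ν₁) (an optimal transport map), and similarly r₂ : Y → Y pushes μ₂ to ν₂ with ∫ d_Y(y, r₂(y))² dμ₂(y) = W₂²(μ₂, ν₂). Then the map r = (r₁, r₂) : X × Y → X × Y pushes μ₁ ⊗ μ₂ forward to ν₁ ⊗ ν₂ and satisfies ∫ d((x, y), r(x, y))² d(μ₁ ⊗ μ₂)(x, y) = W₂²(μ₁ ⊗ μ₂, ν₁ ⊗ ν₂); that is, r is an optimal transport map between μ₁ ⊗ μ₂ and ν₁ ⊗ ν₂. -/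
open MeasureTheory ENNReal

/-- A coupling of `μ` and `ν` is a measure on the product whose first marginal is `μ`
and whose second marginal is `ν`. -/
def IsCoupling {Z : Type*} [MeasurableSpace Z]
    (γ : Measure (Z × Z)) (μ ν : Measure Z) : Prop :=
  γ.map Prod.fst = μ ∧ γ.map Prod.snd = ν

/-- The squared 2-Wasserstein distance associated with the squared-distance cost `c`:
the infimum over all couplings `γ` of `μ` and `ν` of `∫ c(x, y) dγ(x, y)`. -/
noncomputable def W2sq {Z : Type*} [MeasurableSpace Z]
    (c : Z → Z → ℝ≥0∞) (μ ν : Measure Z) : ℝ≥0∞ :=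
  ⨅ γ ∈ {γ : Measure (Z × Z) | IsCoupling γ μ ν}, ∫⁻ p, c p.1 p.2 ∂γ

/-!
The graph coupling `x ↦ (x, r x)` of the product map shows that the cost of `(r₁, r₂)` bounds
`W₂²(μ₁ ⊗ μ₂, ν₁ ⊗ ν₂)` from above. Conversely, the cost `d_X² + d_Y²` splits, and a coupling of
the products projects to a coupling of `μ₁, ν₁` and one of `μ₂, ν₂`, so
`W₂²(μ₁, ν₁) + W₂²(μ₂, ν₂) ≤ W₂²(μ₁ ⊗ μ₂, ν₁ ⊗ ν₂)`; the left side is the cost of `(r₁, r₂)`.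
-/

section Coupling

variable {Z Z' W : Type*} [MeasurableSpace Z] [MeasurableSpace Z'] [MeasurableSpace W]

lemma W2sq_le_lintegral_of_isCoupling_map {c : Z → Z → ℝ≥0∞} {μ ν : Measure Z} {γ : Measure W}
    {f : W → Z × Z} (hγ : IsCoupling (γ.map f) μ ν) :
    W2sq c μ ν ≤ ∫⁻ p, c (f p).1 (f p).2 ∂γ :=
  (iInf₂_le (γ.map f) hγ).trans (lintegral_map_le (fun q : Z × Z ↦ c q.1 q.2) f)

lemma isCoupling_map_graph {μ ν : Measure Z} {r : Z → Z} (hr : Measurable r)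
    (hpush : μ.map r = ν) : IsCoupling (μ.map fun x ↦ (x, r x)) μ ν := by
  have hgraph : Measurable fun x ↦ (x, r x) := measurable_id.prodMk hr
  constructor
  · rw [Measure.map_map measurable_fst hgraph]
    exact Measure.map_id
  · rwa [Measure.map_map measurable_snd hgraph]

lemma W2sq_le_lintegral_of_map_eq (c : Z → Z → ℝ≥0∞) {μ ν : Measure Z} {r : Z → Z}
    (hr : Measurable r) (hpush : μ.map r = ν) : W2sq c μ ν ≤ ∫⁻ x, c x (r x) ∂μ :=
  W2sq_le_lintegral_of_isCoupling_map (isCoupling_map_graph hr hpush)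

lemma IsCoupling.map_prodMap {γ : Measure (Z × Z)} {μ ν : Measure Z} (hγ : IsCoupling γ μ ν)
    {f : Z → Z'} (hf : Measurable f) : IsCoupling (γ.map (Prod.map f f)) (μ.map f) (ν.map f) := by
  obtain ⟨hfst, hsnd⟩ := hγ
  constructor
  · rw [Measure.map_map measurable_fst (hf.prodMap hf), ← hfst,
      Measure.map_map hf measurable_fst]
    rfl
  · rw [Measure.map_map measurable_snd (hf.prodMap hf), ← hsnd,
      Measure.map_map hf measurable_snd]
    rfl

end Coupling

section Product

variable {X Y : Type*} [MeasurableSpace X] [MeasurableSpace Y]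

lemma lintegral_prod_add_le (μ : Measure X) (ν : Measure Y) [IsProbabilityMeasure μ]
    [IsProbabilityMeasure ν] (f : X → ℝ≥0∞) (g : Y → ℝ≥0∞) :
    ∫⁻ q, (f q.1 + g q.2) ∂μ.prod ν ≤ ∫⁻ x, f x ∂μ + ∫⁻ y, g y ∂ν :=
  calc ∫⁻ q, (f q.1 + g q.2) ∂μ.prod ν ≤ ∫⁻ x, ∫⁻ y, (f x + g y) ∂ν ∂μ := lintegral_prod_le _
    _ = ∫⁻ x, (f x + ∫⁻ y, g y ∂ν) ∂μ := by simp [lintegral_add_left measurable_const]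
    _ = ∫⁻ x, f x ∂μ + ∫⁻ y, g y ∂ν := by simp [lintegral_add_right _ measurable_const]

lemma W2sq_add_le_W2sq_prod (c₁ : X → X → ℝ≥0∞) (c₂ : Y → Y → ℝ≥0∞)
    (μ₁ ν₁ : Measure X) (μ₂ ν₂ : Measure Y) [IsProbabilityMeasure μ₁] [IsProbabilityMeasure ν₁]
    [IsProbabilityMeasure μ₂] [IsProbabilityMeasure ν₂] :
    W2sq c₁ μ₁ ν₁ + W2sq c₂ μ₂ ν₂
      ≤ W2sq (fun a b ↦ c₁ a.1 b.1 + c₂ a.2 b.2) (μ₁.prod μ₂) (ν₁.prod ν₂) := by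
  refine le_iInf₂ fun γ hγ ↦ ?_
  have hX : IsCoupling (γ.map (Prod.map Prod.fst Prod.fst)) μ₁ ν₁ := by
    simpa using hγ.map_prodMap measurable_fst
  have hY : IsCoupling (γ.map (Prod.map Prod.snd Prod.snd)) μ₂ ν₂ := by
    simpa using hγ.map_prodMap measurable_snd
  calc W2sq c₁ μ₁ ν₁ + W2sq c₂ μ₂ ν₂
      ≤ ∫⁻ p, c₁ p.1.1 p.2.1 ∂γ + ∫⁻ p, c₂ p.1.2 p.2.2 ∂γ :=
        add_le_add (W2sq_le_lintegral_of_isCoupling_map hX)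
          (W2sq_le_lintegral_of_isCoupling_map hY)
    _ ≤ ∫⁻ p, (c₁ p.1.1 p.2.1 + c₂ p.1.2 p.2.2) ∂γ := le_lintegral_add _ _

end Product

theorem optimal_map_prod_general
    (X Y : Type*)
    [MetricSpace X] [MeasurableSpace X]
    [MetricSpace Y] [MeasurableSpace Y]
    (μ₁ ν₁ : Measure X) (μ₂ ν₂ : Measure Y)
    [IsProbabilityMeasure μ₁] [IsProbabilityMeasure ν₁]
    [IsProbabilityMeasure μ₂] [IsProbabilityMeasure ν₂]
    (r₁ : X → X) (r₂ : Y → Y)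
    (hr₁ : Measurable r₁) (hr₂ : Measurable r₂)
    (hpush₁ : μ₁.map r₁ = ν₁) (hpush₂ : μ₂.map r₂ = ν₂)
    (hopt₁ : (∫⁻ x, edist x (r₁ x) ^ 2 ∂μ₁) = W2sq (fun x y : X => edist x y ^ 2) μ₁ ν₁)
    (hopt₂ : (∫⁻ y, edist y (r₂ y) ^ 2 ∂μ₂) = W2sq (fun x y : Y => edist x y ^ 2) μ₂ ν₂) :
    (μ₁.prod μ₂).map (Prod.map r₁ r₂) = ν₁.prod ν₂
    ∧ (∫⁻ q, (edist q.1 (r₁ q.1) ^ 2 + edist q.2 (r₂ q.2) ^ 2) ∂(μ₁.prod μ₂))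
        = W2sq (fun a b : X × Y => edist a.1 b.1 ^ 2 + edist a.2 b.2 ^ 2)
            (μ₁.prod μ₂) (ν₁.prod ν₂) := by
  have hpush : (μ₁.prod μ₂).map (Prod.map r₁ r₂) = ν₁.prod ν₂ := by
    rw [← Measure.map_prod_map _ _ hr₁ hr₂, hpush₁, hpush₂]
  refine ⟨hpush, le_antisymm ?_ ?_⟩
  · calc _ ≤ ∫⁻ x, edist x (r₁ x) ^ 2 ∂μ₁ + ∫⁻ y, edist y (r₂ y) ^ 2 ∂μ₂ :=
          lintegral_prod_add_le μ₁ μ₂ (fun x ↦ edist x (r₁ x) ^ 2) (fun y ↦ edist y (r₂ y) ^ 2)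
      _ ≤ _ := hopt₁ ▸ hopt₂ ▸ W2sq_add_le_W2sq_prod _ _ μ₁ ν₁ μ₂ ν₂
  · exact W2sq_le_lintegral_of_map_eq _ (hr₁.prodMap hr₂) hpush

/-- If `r₁` is an optimal transport map from `μ₁` to `ν₁` and `r₂` is an optimal
transport map from `μ₂` to `ν₂`, then `r = (r₁, r₂)` pushes `μ₁ ⊗ μ₂` forward to
`ν₁ ⊗ ν₂` and is an optimal transport map between them, for the metric on `X × Y`
whose square is `d_X² + d_Y²`. -/
theorem optimal_map_prod
    (X Y : Type*)
    [MetricSpace X] [MeasurableSpace X] [BorelSpace X]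
    [MetricSpace Y] [MeasurableSpace Y] [BorelSpace Y]
    (μ₁ ν₁ : Measure X) (μ₂ ν₂ : Measure Y)
    [IsProbabilityMeasure μ₁] [IsProbabilityMeasure ν₁]
    [IsProbabilityMeasure μ₂] [IsProbabilityMeasure ν₂]
    (r₁ : X → X) (r₂ : Y → Y)
    (hr₁ : Measurable r₁) (hr₂ : Measurable r₂)
    (hpush₁ : μ₁.map r₁ = ν₁) (hpush₂ : μ₂.map r₂ = ν₂)
    (hopt₁ : (∫⁻ x, edist x (r₁ x) ^ 2 ∂μ₁) = W2sq (fun x y : X => edist x y ^ 2) μ₁ ν₁)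
    (hopt₂ : (∫⁻ y, edist y (r₂ y) ^ 2 ∂μ₂) = W2sq (fun x y : Y => edist x y ^ 2) μ₂ ν₂) :
    (μ₁.prod μ₂).map (Prod.map r₁ r₂) = ν₁.prod ν₂
    ∧ (∫⁻ q, (edist q.1 (r₁ q.1) ^ 2 + edist q.2 (r₂ q.2) ^ 2) ∂(μ₁.prod μ₂))
        = W2sq (fun a b : X × Y => edist a.1 b.1 ^ 2 + edist a.2 b.2 ^ 2)
            (μ₁.prod μ₂) (ν₁.prod ν₂) :=
  optimal_map_prod_general X Y μ₁ ν₁ μ₂ ν₂ r₁ r₂ hr₁ hr₂ hpush₁ hpush₂ hopt₁ hopt₂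
end

section
/- Fix N ≥ 1 and let indices range over ℤ/Nℤ (periodic boundary conditions). Let δt, δx > 0, let u : ℤ/Nℤ → ℝ and w : ℤ/Nℤ → ℝ be interface velocities, and let ρ : ℤ/Nℤ → ℝ be given cell values. Define the upwind flux A(v, a, b) = v·a if v ≥ 0 and v·b if v < 0, and define the updated values ρ'_i = ρ_i − (δt/δx)(A(u_{i+1}, ρ_i, ρ_{i+1}) − A(u_i, ρ_{i−1}, ρ_i)) − (δt/δx)(A(w_{i+1}, ρ_i, ρ_{i+1}) − A(w_i, ρ_{i−1}, ρ_i)). If ρ_i ≥ 0 for all i and the CFL condition δt · (max_i |u_i| + max_i |w_i|) ≤ δx/2 holds, then ρ'_i ≥ 0 for all i. -/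
/-- The upwind numerical flux: `A(v, ρ⁻, ρ⁺) = v·ρ⁻` if `v ≥ 0` and `v·ρ⁺` if `v < 0`. -/
noncomputable def upwindFlux (v a b : ℝ) : ℝ := if 0 ≤ v then v * a else v * b

lemma upwindFlux_eq (v a b : ℝ) :
    upwindFlux v a b = max v 0 * a + min v 0 * b := by
  unfold upwindFlux
  split_ifs with h
  · rw [max_eq_left h, min_eq_right h]; ring
  · push_neg at h
    rw [max_eq_right h.le, min_eq_left h.le]; ring

/-- Positivity of the explicit upwind scheme with two separately upwinded velocity
fields `u` and `w` on a periodic grid of `N ≥ 1` cells, under the CFL condition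
`δt·(max_i |u_i| + max_i |w_i|) ≤ δx/2`. -/
theorem upwind_scheme_nonneg
    (N : ℕ) (hN : 1 ≤ N) [NeZero N]
    (δt δx : ℝ) (hδt : 0 < δt) (hδx : 0 < δx)
    (u w ρ ρ' : ZMod N → ℝ)
    (hρ' : ∀ i : ZMod N, ρ' i =
      ρ i - (δt / δx) * (upwindFlux (u (i + 1)) (ρ i) (ρ (i + 1))
                          - upwindFlux (u i) (ρ (i - 1)) (ρ i))
          - (δt / δx) * (upwindFlux (w (i + 1)) (ρ i) (ρ (i + 1))
                          - upwindFlux (w i) (ρ (i - 1)) (ρ i)))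
    (hpos : ∀ i : ZMod N, 0 ≤ ρ i)
    (hCFL : δt * ((⨆ i : ZMod N, |u i|) + (⨆ i : ZMod N, |w i|)) ≤ δx / 2) :
    ∀ i : ZMod N, 0 ≤ ρ' i := by
  intro i
  set Su := ⨆ i : ZMod N, |u i| with hSu
  set Sw := ⨆ i : ZMod N, |w i| with hSw
  have hbu : ∀ j : ZMod N, |u j| ≤ Su := fun j =>
    le_ciSup (f := fun j => |u j|) (Set.Finite.bddAbove (Set.finite_range _)) j
  have hbw : ∀ j : ZMod N, |w j| ≤ Sw := fun j =>
    le_ciSup (f := fun j => |w j|) (Set.Finite.bddAbove (Set.finite_range _)) j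
  set lam := δt / δx with hlam
  have hlampos : 0 < lam := div_pos hδt hδx
  -- CFL in the form lam * (2Su + 2Sw) ≤ 1
  have hCFL' : lam * (2 * Su + 2 * Sw) ≤ 1 := by
    rw [hlam, div_mul_eq_mul_div, div_le_one hδx]
    nlinarith [hCFL]
  rw [hρ' i, upwindFlux_eq, upwindFlux_eq, upwindFlux_eq, upwindFlux_eq]
  -- abbreviations
  set a1 := max (u (i + 1)) 0 with ha1
  set b1 := min (u (i + 1)) 0 with hb1
  set a0 := max (u i) 0 with ha0
  set b0 := min (u i) 0 with hb0
  set c1 := max (w (i + 1)) 0 with hc1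
  set d1 := min (w (i + 1)) 0 with hd1
  set c0 := max (w i) 0 with hc0
  set d0 := min (w i) 0 with hd0
  have h1 : 0 ≤ a1 := le_max_right _ _
  have h2 : b1 ≤ 0 := min_le_right _ _
  have h3 : 0 ≤ a0 := le_max_right _ _
  have h4 : b0 ≤ 0 := min_le_right _ _
  have h5 : 0 ≤ c1 := le_max_right _ _
  have h6 : d1 ≤ 0 := min_le_right _ _
  have h7 : 0 ≤ c0 := le_max_right _ _
  have h8 : d0 ≤ 0 := min_le_right _ _
  have ha1' : a1 ≤ Su := max_le ((le_abs_self _).trans (hbu _))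
    ((abs_nonneg _).trans (hbu (i+1)))
  have hb0' : -Su ≤ b0 := le_min
    (by have := hbu i; have := neg_abs_le (u i); linarith)
    (by have := hbu i; have := abs_nonneg (u i); linarith)
  have hc1' : c1 ≤ Sw := max_le ((le_abs_self _).trans (hbw _))
    ((abs_nonneg _).trans (hbw (i+1)))
  have hd0' : -Sw ≤ d0 := le_min
    (by have := hbw i; have := neg_abs_le (w i); linarith)
    (by have := hbw i; have := abs_nonneg (w i); linarith)
  have hcoef : 0 ≤ 1 - lam * (a1 - b0 + c1 - d0) := by
    have hb : a1 - b0 + c1 - d0 ≤ 2 * Su + 2 * Sw := by linarith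
    nlinarith [mul_le_mul_of_nonneg_left hb hlampos.le]
  have key :
      ρ i - lam * ((a1 * ρ i + b1 * ρ (i + 1)) - (a0 * ρ (i - 1) + b0 * ρ i))
          - lam * ((c1 * ρ i + d1 * ρ (i + 1)) - (c0 * ρ (i - 1) + d0 * ρ i))
      = ρ i * (1 - lam * (a1 - b0 + c1 - d0))
        + lam * (-b1) * ρ (i + 1) + lam * a0 * ρ (i - 1)
        + lam * (-d1) * ρ (i + 1) + lam * c0 * ρ (i - 1) := by ring
  rw [key]
  have p0 := hpos i
  have p1 := hpos (i + 1)
  have pm := hpos (i - 1)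
  have := mul_nonneg p0 hcoef
  have t1 : 0 ≤ lam * (-b1) * ρ (i + 1) :=
    mul_nonneg (mul_nonneg hlampos.le (by linarith)) p1
  have t2 : 0 ≤ lam * a0 * ρ (i - 1) :=
    mul_nonneg (mul_nonneg hlampos.le h3) pm
  have t3 : 0 ≤ lam * (-d1) * ρ (i + 1) :=
    mul_nonneg (mul_nonneg hlampos.le (by linarith)) p1
  have t4 : 0 ≤ lam * c0 * ρ (i - 1) :=
    mul_nonneg (mul_nonneg hlampos.le h7) pm
  linarith
end

section
/- Fix N ≥ 1 and let indices range over ℤ/Nℤ (periodic boundary conditions). Let δt, δx > 0, let u : ℤ/Nℤ → ℝ be interface velocities, ρ : ℤ/Nℤ → ℝ cell values, and let p : ℤ/Nℤ → ℝ satisfy the discrete Poisson equation (p_{i+1} − 2p_i + p_{i−1})/δx² = (1/δx)(A(u_{i+1}, ρ_i, ρ_{i+1}) − A(u_i, ρ_{i−1}, ρ_i)) for all i, where A(v, a, b) = v·a if v ≥ 0 and v·b if v < 0. Set w_i = −(p_i − p_{i−1})/δx, and define ρ'_i = ρ_i − (δt/δx)(A(u_{i+1}, ρ_i, ρ_{i+1})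 − A(u_i, ρ_{i−1}, ρ_i)) − (δt/δx)(A(w_{i+1}, ρ_i, ρ_{i+1}) − A(w_i, ρ_{i−1}, ρ_i)). Then the complementary values μ_i = 1 − ρ_i and μ'_i = 1 − ρ'_i satisfy the single-velocity upwind scheme μ'_i = μ_i − (δt/δx)(A(w_{i+1}, μ_i, μ_{i+1}) − A(w_i, μ_{i−1}, μ_i)) for all i. -/
/-- If the discrete pressure solves the discrete Poisson equation whose right-hand side is
the discrete divergence of the upwind flux of `ρu`, and `w` is the discrete gradient of
`−p`, then the complementary values `μ = 1 − ρ` satisfy the single-velocity upwind scheme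
with velocity `w`. -/
theorem complementary_upwind_scheme
    (N : ℕ) (hN : 1 ≤ N) [NeZero N]
    (δt δx : ℝ) (hδt : 0 < δt) (hδx : 0 < δx)
    (u ρ p w ρ' : ZMod N → ℝ)
    (hPoisson : ∀ i : ZMod N,
      (p (i + 1) - 2 * p i + p (i - 1)) / δx ^ 2 =
        (1 / δx) * (upwindFlux (u (i + 1)) (ρ i) (ρ (i + 1))
                     - upwindFlux (u i) (ρ (i - 1)) (ρ i)))
    (hw : ∀ i : ZMod N, w i = -((p i - p (i - 1)) / δx))
    (hρ' : ∀ i : ZMod N, ρ' i =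
      ρ i - (δt / δx) * (upwindFlux (u (i + 1)) (ρ i) (ρ (i + 1))
                          - upwindFlux (u i) (ρ (i - 1)) (ρ i))
          - (δt / δx) * (upwindFlux (w (i + 1)) (ρ i) (ρ (i + 1))
                          - upwindFlux (w i) (ρ (i - 1)) (ρ i))) :
    ∀ i : ZMod N, 1 - ρ' i =
      (1 - ρ i) - (δt / δx) * (upwindFlux (w (i + 1)) (1 - ρ i) (1 - ρ (i + 1))
                                - upwindFlux (w i) (1 - ρ (i - 1)) (1 - ρ i)) := by
  intro i
  have key : ∀ v a b : ℝ, upwindFlux v (1 - a) (1 - b) = v - upwindFlux v a b := by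
    intro v a b; unfold upwindFlux; split <;> ring
  have hP := hPoisson i
  have hw1 := hw (i + 1)
  have hw0 := hw i
  rw [add_sub_cancel_right] at hw1
  rw [hρ' i, key, key, hw1, hw0]
  have hδx' : δx ≠ 0 := ne_of_gt hδx
  field_simp at hP ⊢
  nlinarith [hP, sq_nonneg δx]
end

section
/- Fix N ≥ 1 and let indices range over ℤ/Nℤ (periodic boundary conditions). Let δx > 0, and for each n ∈ ℕ let δt_n > 0, u^n : ℤ/Nℤ → ℝ be interface velocities and ρ^n : ℤ/Nℤ → ℝ cell values defined recursively as follows: p^n : ℤ/Nℤ → ℝ satisfies (p^n_{i+1} − 2p^n_i + p^n_{i−1})/δx² = (1/δx)(A(u^n_{i+1}, ρ^n_i, ρ^n_{i+1}) − A(u^n_i, ρ^n_{i−1}, ρ^n_i)); w^n_i = −(p^n_i − p^n_{i−1})/δx; and ρ^{n+1}_i = ρ^n_i − (δt_n/δx)(A(u^n_{i+1}, ρ^n_i, ρ^n_{i+1}) − A(u^n_i, ρ^n_{i−1}, ρ^n_i)) − (δt_n/δx)(A(w^n_{i+1}, ρ^n_i, ρ^n_{i+1}) − A(w^n_i, ρ^n_{i−1},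 ρ^n_i)), where A(v, a, b) = v·a if v ≥ 0 and v·b if v < 0. Assume each time step satisfies the CFL condition δt_n · (max_i |u^n_i| + max_i |w^n_i|) ≤ δx/2. If 0 ≤ ρ^0_i ≤ 1 for all i, then 0 ≤ ρ^n_i ≤ 1 for all i and all n (discrete maximum principle). -/
open Set

lemma upwindFlux_eq_posPart_sub_negPart (v a b : ℝ) : upwindFlux v a b = v⁺ * a - v⁻ * b := by
  unfold upwindFlux
  split_ifs with hv
  · rw [posPart_eq_self.2 hv, negPart_eq_zero.2 hv]; ring
  · have hv : v ≤ 0 := (not_le.1 hv).le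
    rw [posPart_eq_zero.2 hv, negPart_eq_neg.2 hv]; ring

section PosPart

variable {α : Type*} [AddCommGroup α] [LinearOrder α] [IsOrderedAddMonoid α]

lemma posPart_le_abs (a : α) : a⁺ ≤ |a| := sup_le (le_abs_self a) (abs_nonneg a)

lemma negPart_le_abs (a : α) : a⁻ ≤ |a| := sup_le (neg_le_abs a) (abs_nonneg a)

end PosPart

section Upwind

variable {ι : Type*} [AddGroup ι] [One ι]

/-- `δx` times the discrete divergence at cell `i` of the upwind flux of `f`, the velocity
`v i` living on the interface between cells `i - 1` and `i`. -/
noncomputable def upwindDiv (v f : ι → ℝ) (i : ι) : ℝ :=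
  upwindFlux (v (i + 1)) (f i) (f (i + 1)) - upwindFlux (v i) (f (i - 1)) (f i)

noncomputable def outflowRate (v : ι → ℝ) (i : ι) : ℝ := (v (i + 1))⁺ + (v i)⁻

lemma outflowRate_nonneg (v : ι → ℝ) (i : ι) : 0 ≤ outflowRate v i :=
  add_nonneg (posPart_nonneg _) (negPart_nonneg _)

lemma outflowRate_le_two_mul_iSup_abs [Finite ι] (v : ι → ℝ) (i : ι) :
    outflowRate v i ≤ 2 * ⨆ j, |v j| := by
  have hbdd := Finite.bddAbove_range fun j => |v j|
  have h₁ := (posPart_le_abs _).trans (le_ciSup hbdd (i + 1))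
  have h₂ := (negPart_le_abs _).trans (le_ciSup hbdd i)
  unfold outflowRate
  linarith

lemma upwindDiv_le_outflowRate_mul {v f : ι → ℝ} (hf : ∀ j, 0 ≤ f j) (i : ι) :
    upwindDiv v f i ≤ outflowRate v i * f i := by
  have h₁ := mul_nonneg (negPart_nonneg (v (i + 1))) (hf (i + 1))
  have h₂ := mul_nonneg (posPart_nonneg (v i)) (hf (i - 1))
  simp only [upwindDiv, outflowRate, upwindFlux_eq_posPart_sub_negPart]
  linarith

lemma upwindDiv_one_sub (v f : ι → ℝ) (i : ι) :
    upwindDiv v (fun j => 1 - f j) i = (v (i + 1) - v i) - upwindDiv v f i := by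
  simp only [upwindDiv, upwindFlux_eq_posPart_sub_negPart]
  linear_combination posPart_sub_negPart (v (i + 1)) - posPart_sub_negPart (v i)

theorem upwindStep_mem_Icc {r : ℝ} (hr : 0 ≤ r) {u w ρ : ι → ℝ} (hρ : ∀ j, ρ j ∈ Icc 0 1)
    {i : ι} (hw : w (i + 1) - w i = -upwindDiv u ρ i)
    (hCFL : r * (outflowRate u i + outflowRate w i) ≤ 1) :
    ρ i - r * upwindDiv u ρ i - r * upwindDiv w ρ i ∈ Icc 0 1 := by
  constructor
  · calc 0 ≤ (1 - r * (outflowRate u i + outflowRate w i)) * ρ i :=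
          mul_nonneg (by linarith) (hρ i).1
      _ = ρ i - r * (outflowRate u i * ρ i) - r * (outflowRate w i * ρ i) := by ring
      _ ≤ ρ i - r * upwindDiv u ρ i - r * upwindDiv w ρ i := by
          gcongr <;> exact upwindDiv_le_outflowRate_mul (fun j => (hρ j).1) i
  · have h1ρ : 0 ≤ 1 - ρ i := sub_nonneg.2 (hρ i).2
    have hcompl := upwindDiv_le_outflowRate_mul (v := w) (f := fun j => 1 - ρ j)
      (fun j => sub_nonneg.2 (hρ j).2) i
    rw [upwindDiv_one_sub, hw] at hcompl
    have hrest : 0 ≤ (1 - r * outflowRate w i) * (1 - ρ i) :=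
      mul_nonneg (by linarith [mul_nonneg hr (outflowRate_nonneg u i)]) h1ρ
    calc ρ i - r * upwindDiv u ρ i - r * upwindDiv w ρ i
        = ρ i + r * (-upwindDiv u ρ i - upwindDiv w ρ i) := by ring
      _ ≤ ρ i + r * (outflowRate w i * (1 - ρ i)) := by gcongr
      _ ≤ 1 := by linarith

lemma sub_eq_neg_of_poisson {δx g : ℝ} (hδx : δx ≠ 0)
    {p w : ι → ℝ} {i : ι}
    (hPoisson : (p (i + 1) - 2 * p i + p (i - 1)) / δx ^ 2 = (1 / δx) * g)
    (hw : ∀ j, w j = -((p j - p (j - 1)) / δx)) :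
    w (i + 1) - w i = -g := by
  rw [hw, hw, add_sub_cancel_right]
  field_simp at hPoisson ⊢
  linear_combination -hPoisson

lemma mesh_ratio_mul_outflowRate_le_one [Finite ι]
    {δx δt : ℝ} (hδx : 0 < δx) (hδt : 0 ≤ δt) {u w : ι → ℝ}
    (hCFL : δt * ((⨆ j, |u j|) + (⨆ j, |w j|)) ≤ δx / 2) (i : ι) :
    δt / δx * (outflowRate u i + outflowRate w i) ≤ 1 := by
  have hu := outflowRate_le_two_mul_iSup_abs u i
  have hw := outflowRate_le_two_mul_iSup_abs w i
  rw [div_mul_eq_mul_div, div_le_one hδx]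
  nlinarith

end Upwind

theorem discrete_maximum_principle_general
    (N : ℕ) [NeZero N]
    (δx : ℝ) (hδx : 0 < δx)
    (δt : ℕ → ℝ) (hδt : ∀ n, 0 < δt n)
    (u ρ p w : ℕ → ZMod N → ℝ)
    (hPoisson : ∀ n, ∀ i : ZMod N,
      (p n (i + 1) - 2 * p n i + p n (i - 1)) / δx ^ 2 =
        (1 / δx) * (upwindFlux (u n (i + 1)) (ρ n i) (ρ n (i + 1))
                     - upwindFlux (u n i) (ρ n (i - 1)) (ρ n i)))
    (hw : ∀ n, ∀ i : ZMod N, w n i = -((p n i - p n (i - 1)) / δx))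
    (hupdate : ∀ n, ∀ i : ZMod N, ρ (n + 1) i =
      ρ n i - (δt n / δx) * (upwindFlux (u n (i + 1)) (ρ n i) (ρ n (i + 1))
                              - upwindFlux (u n i) (ρ n (i - 1)) (ρ n i))
            - (δt n / δx) * (upwindFlux (w n (i + 1)) (ρ n i) (ρ n (i + 1))
                              - upwindFlux (w n i) (ρ n (i - 1)) (ρ n i)))
    (hCFL : ∀ n, δt n * ((⨆ i : ZMod N, |u n i|) + (⨆ i : ZMod N, |w n i|)) ≤ δx / 2)
    (hinit : ∀ i : ZMod N, 0 ≤ ρ 0 i ∧ ρ 0 i ≤ 1) :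
    ∀ n, ∀ i : ZMod N, 0 ≤ ρ n i ∧ ρ n i ≤ 1 := by
  intro n
  induction n with
  | zero => exact hinit
  | succ n ih =>
    intro i
    rw [hupdate n i]
    exact upwindStep_mem_Icc (div_nonneg (hδt n).le hδx.le) ih
      (sub_eq_neg_of_poisson hδx.ne' (hPoisson n i) (hw n))
      (mesh_ratio_mul_outflowRate_le_one hδx (hδt n).le (hCFL n) i)

/-- Discrete maximum principle for the explicit upwind finite-volume scheme for the
congested transport model on a periodic grid of `N ≥ 1` cells: if `0 ≤ ρ⁰ ≤ 1` and every
time step satisfies the CFL condition `δtₙ·(max_i |uⁿ_i| + max_i |wⁿ_i|) ≤ δx/2`, then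
`0 ≤ ρⁿ ≤ 1` for all `n`. -/
theorem discrete_maximum_principle
    (N : ℕ) (hN : 1 ≤ N) [NeZero N]
    (δx : ℝ) (hδx : 0 < δx)
    (δt : ℕ → ℝ) (hδt : ∀ n, 0 < δt n)
    (u ρ p w : ℕ → ZMod N → ℝ)
    (hPoisson : ∀ n, ∀ i : ZMod N,
      (p n (i + 1) - 2 * p n i + p n (i - 1)) / δx ^ 2 =
        (1 / δx) * (upwindFlux (u n (i + 1)) (ρ n i) (ρ n (i + 1))
                     - upwindFlux (u n i) (ρ n (i - 1)) (ρ n i)))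
    (hw : ∀ n, ∀ i : ZMod N, w n i = -((p n i - p n (i - 1)) / δx))
    (hupdate : ∀ n, ∀ i : ZMod N, ρ (n + 1) i =
      ρ n i - (δt n / δx) * (upwindFlux (u n (i + 1)) (ρ n i) (ρ n (i + 1))
                              - upwindFlux (u n i) (ρ n (i - 1)) (ρ n i))
            - (δt n / δx) * (upwindFlux (w n (i + 1)) (ρ n i) (ρ n (i + 1))
                              - upwindFlux (w n i) (ρ n (i - 1)) (ρ n i)))
    (hCFL : ∀ n, δt n * ((⨆ i : ZMod N, |u n i|) + (⨆ i : ZMod N, |w n i|)) ≤ δx / 2)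
    (hinit : ∀ i : ZMod N, 0 ≤ ρ 0 i ∧ ρ 0 i ≤ 1) :
    ∀ n, ∀ i : ZMod N, 0 ≤ ρ n i ∧ ρ n i ≤ 1 :=
  discrete_maximum_principle_general N δx hδx δt hδt u ρ p w hPoisson hw hupdate hCFL hinit
end
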